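/- arXiv:2007.08358 — 2 statements merged into one kernel-verified Lean document; each statement's English description precedes it below -/
import Mathlib

section
/- Let a, b be integers and set xₙ = a·uₙ + b·vₙ for n ≥ 0. Let m ≥ 2 be an integer with gcd(a² − 5b², m) = 1. Then the least integer k ≥ 1 such that x_{n+k} ≡ xₙ (mod m) for all n ≥ 0 is equal to π(m), the Pisano period of m. -/
/-- The Fibonacci numbers as integers: `u₀ = 0`, `u₁ = 1`, `u_{n+2} = u_{n+1} + uₙ`. -/
def fibZ (n : ℕ) : ℤ := Nat.fib n

/-- The Lucas numbers: `v₀ = 2`, `v₁ = 1`, `v_{n+2} = v_{n+1} + vₙ`. -/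
def lucasZ : ℕ → ℤ
  | 0 => 2
  | 1 => 1
  | n + 2 => lucasZ (n + 1) + lucasZ n

/-- The Pisano period of `m`: the least `k ≥ 1` such that the Fibonacci sequence
modulo `m` is (purely) periodic with period `k`. -/
noncomputable def pisano (m : ℕ) : ℕ :=
  sInf {k : ℕ | 1 ≤ k ∧ ∀ n : ℕ, Nat.fib (n + k) % m = Nat.fib n % m}

lemma fibZ_add_two (n : ℕ) : fibZ (n + 2) = fibZ (n + 1) + fibZ n := by
  simp [fibZ, Nat.fib_add_two]; ring

lemma lucasZ_eq (n : ℕ) : lucasZ n = 2 * fibZ (n + 1) - fibZ n := by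
  induction n using Nat.strong_induction_on with
  | _ n ih =>
    match n with
    | 0 => simp [lucasZ, fibZ]
    | 1 => simp [lucasZ, fibZ]
    | (n + 2) =>
      rw [show lucasZ (n + 2) = lucasZ (n + 1) + lucasZ n from rfl,
        ih (n + 1) (by omega), ih n (by omega)]
      have e1 : fibZ (n + 2 + 1) = fibZ (n + 2) + fibZ (n + 1) := fibZ_add_two (n + 1)
      have e2 : fibZ (n + 2) = fibZ (n + 1) + fibZ n := fibZ_add_two n
      rw [e1, e2]
      ring

lemma key_identity (a b : ℤ) (n : ℕ) :
    (a ^ 2 - 5 * b ^ 2) * fibZ n =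
      (a + b) * (a * fibZ n + b * lucasZ n) - 2 * b * (a * fibZ (n + 1) + b * lucasZ (n + 1)) := by
  rw [lucasZ_eq, lucasZ_eq, show n + 1 + 1 = n + 2 from rfl, fibZ_add_two]
  ring

theorem period_of_fib_type_seq (a b : ℤ) (m : ℕ) (hm : 2 ≤ m)
    (hcop : Int.gcd (a ^ 2 - 5 * b ^ 2) m = 1) :
    sInf {k : ℕ | 1 ≤ k ∧ ∀ n : ℕ,
        a * fibZ (n + k) + b * lucasZ (n + k) ≡ a * fibZ n + b * lucasZ n [ZMOD m]} =
      pisano m := by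
  unfold pisano
  congr 1
  ext k
  simp only [Set.mem_setOf_eq, and_congr_right_iff]
  intro hk
  have cast_iff : ∀ p q : ℕ, Nat.fib p % m = Nat.fib q % m ↔ fibZ p ≡ fibZ q [ZMOD m] := by
    intro p q
    rw [fibZ, fibZ, Int.natCast_modEq_iff]
    rfl
  constructor
  · intro h n
    rw [cast_iff]
    have h1 := h n
    have h2 := h (n + 1)
    have h3 : (a ^ 2 - 5 * b ^ 2) * fibZ (n + k) ≡ (a ^ 2 - 5 * b ^ 2) * fibZ n [ZMOD m] := by
      rw [key_identity, key_identity]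
      have := (h1.mul_left (a + b)).sub (h2.mul_left (2 * b))
      simpa [show n + 1 + k = n + k + 1 by omega] using this
    have hm' : (0:ℤ) < (m:ℤ) := by exact_mod_cast Nat.lt_of_lt_of_le Nat.zero_lt_two hm
    have h4 := Int.ModEq.cancel_left_div_gcd hm' h3
    rw [Int.gcd_comm, hcop] at h4
    simpa using h4
  · intro h n
    have h1 : fibZ (n + k) ≡ fibZ n [ZMOD m] := (cast_iff _ _).mp (h n)
    have h2 : fibZ (n + k + 1) ≡ fibZ (n + 1) [ZMOD m] := by
      have := (cast_iff (n + 1 + k) (n + 1)).mp (h (n + 1))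
      simpa [show n + 1 + k = n + k + 1 by omega] using this
    have hl : lucasZ (n + k) ≡ lucasZ n [ZMOD m] := by
      rw [lucasZ_eq, lucasZ_eq]
      exact (h2.mul_left 2).sub h1
    exact (h1.mul_left a).add (hl.mul_left b)
end

section
/- For every integer n ≥ 1, τ(n) ≡ n·σ₁(n) (mod 5), where σ₁(n) denotes the sum of the positive divisors of n. -/
/-!
Liouville's elementary method evaluates the divisor convolutions `σ₁ ∗ σ₃`, `σ₁ ∗ σ₅` and
`σ₃ ∗ σ₃`: one sums polynomials over the representations `n = a x + b y`, using that the shear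
`((a, x), (b, y)) ↦ ((a, x - y), (a + b, y))` maps those with `y < x` onto those with `a < b`.
With `θ = q d/dq` and
`E₂ = 1 - 24 ∑ σ₁(n) qⁿ`, `E₄ = 1 + 240 ∑ σ₃(n) qⁿ`, `E₆ = 1 - 504 ∑ σ₅(n) qⁿ`, these are
Ramanujan's equations `3 θE₄ = E₂ E₄ - E₆` and `2 θE₆ = E₂ E₆ - E₄²`, whence
`θ(E₄³ - E₆²) = E₂ (E₄³ - E₆²)`. The logarithmic derivative of `Δ = q ∏ (1 - qⁿ)²⁴` gives
`θΔ = E₂ Δ` as well, and over `ℤ` a solution of `θf = E₂ f` is determined by its coefficient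
of `q`; hence `E₄³ - E₆² = 1728 Δ`. Modulo `5`, `E₄ ≡ 1` and `E₆ ≡ E₂` (Fermat: `σ₅ ≡ σ₁`),
so `3 Δ ≡ 1 - E₂² ≡ -2 θE₂ ≡ 3 θ(∑ σ₁(n) qⁿ)`, which is `τ(n) ≡ n σ₁(n)`.
-/

/-- The Ramanujan tau function: `τ(n)` is the coefficient of `qⁿ` in
`q ∏_{i≥1} (1 - qⁱ)²⁴`. Since factors with `i > n` do not affect the
coefficient of `qⁿ`, it suffices to truncate the product at `i = n`. -/
noncomputable def ramanujanTau (n : ℕ) : ℤ :=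
  (Polynomial.X * ∏ i ∈ Finset.range n, (1 - Polynomial.X ^ (i + 1)) ^ 24 :
    Polynomial ℤ).coeff n

open Finset PowerSeries
open scoped ArithmeticFunction.sigma

theorem sum_filter_lt_add_sum_filter_eq_add_sum_filter_gt {ι α M : Type*} [LinearOrder α]
    [AddCommMonoid M] (s : Finset ι) (u w : ι → α) (f : ι → M) :
    ∑ i ∈ s with u i < w i, f i + ∑ i ∈ s with u i = w i, f i + ∑ i ∈ s with w i < u i, f i =
      ∑ i ∈ s, f i := by
  simp only [sum_filter, ← sum_add_distrib]
  refine sum_congr rfl fun i _ => ?_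
  rcases lt_trichotomy (u i) (w i) with h | h | h
  · simp [h, h.ne, h.not_gt]
  · simp [h]
  · simp [h, h.ne', h.not_gt]

theorem natCast_sigma_eq_sum_divisors {R : Type*} [CommSemiring R] (k n : ℕ) :
    (σ k n : R) = ∑ d ∈ n.divisors, (d : R) ^ k := by
  simp [ArithmeticFunction.sigma_apply]

section Quadruples

def quadruples (n : ℕ) : Finset ((ℕ × ℕ) × (ℕ × ℕ)) :=
  (antidiagonal n).biUnion fun p => p.1.divisorsAntidiagonal ×ˢ p.2.divisorsAntidiagonal

theorem mem_quadruples {n : ℕ} {v : (ℕ × ℕ) × (ℕ × ℕ)} :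
    v ∈ quadruples n ↔ v.1.1 * v.1.2 + v.2.1 * v.2.2 = n ∧
      v.1.1 ≠ 0 ∧ v.1.2 ≠ 0 ∧ v.2.1 ≠ 0 ∧ v.2.2 ≠ 0 := by
  simp only [quadruples, mem_biUnion, mem_product, Nat.mem_divisorsAntidiagonal,
    HasAntidiagonal.mem_antidiagonal, Prod.exists]
  constructor
  · rintro ⟨i, j, rfl, ⟨rfl, hi⟩, rfl, hj⟩
    simp_all
  · rintro ⟨h, ha, hx, hb, hy⟩
    exact ⟨_, _, h, ⟨rfl, mul_ne_zero ha hx⟩, rfl, mul_ne_zero hb hy⟩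

variable {M : Type*} [AddCommMonoid M] (n : ℕ)

theorem sum_quadruples (F : (ℕ × ℕ) × (ℕ × ℕ) → M) :
    ∑ v ∈ quadruples n, F v =
      ∑ p ∈ antidiagonal n, ∑ u ∈ p.1.divisorsAntidiagonal, ∑ w ∈ p.2.divisorsAntidiagonal,
        F (u, w) := by
  rw [quadruples, sum_biUnion]
  · simp only [sum_product]
  · intro p _ q _ hpq
    refine disjoint_left.mpr fun v hvp hvq => hpq ?_
    simp only [mem_product, Nat.mem_divisorsAntidiagonal] at hvp hvq
    exact Prod.ext (hvp.1.1.symm.trans hvq.1.1) (hvp.2.1.symm.trans hvq.2.1)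

theorem sum_filter_quadruples_swap (p : (ℕ × ℕ) × (ℕ × ℕ) → Prop) [DecidablePred p]
    (F : (ℕ × ℕ) × (ℕ × ℕ) → M) :
    ∑ v ∈ quadruples n with p v.swap, F v.swap = ∑ v ∈ quadruples n with p v, F v := by
  refine sum_nbij' Prod.swap Prod.swap ?_ ?_ (fun _ _ => rfl) (fun _ _ => rfl) (fun _ _ => rfl) <;>
  · intro v hv
    simp only [mem_filter, mem_quadruples] at hv ⊢
    exact ⟨⟨by simp [← hv.1.1, add_comm], by tauto⟩, hv.2⟩

theorem sum_quadruples_shear (g : ℕ → ℕ → M) :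
    ∑ v ∈ quadruples n with v.2.2 < v.1.2, g v.1.1 (v.1.1 + v.2.1) =
      ∑ v ∈ quadruples n with v.1.1 < v.2.1, g v.1.1 v.2.1 := by
  refine sum_nbij' (fun v => ((v.1.1, v.1.2 - v.2.2), (v.1.1 + v.2.1, v.2.2)))
    (fun v => ((v.1.1, v.1.2 + v.2.2), (v.2.1 - v.1.1, v.2.2))) ?_ ?_ ?_ ?_ (fun _ _ => rfl)
  · rintro ⟨⟨a, x⟩, b, y⟩ hv
    simp only [mem_filter, mem_quadruples] at hv ⊢
    obtain ⟨⟨h, ha, hx, hb, hy⟩, hyx⟩ := hv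
    refine ⟨⟨?_, ha, by omega, by omega, hy⟩, by omega⟩
    zify [hyx.le] at h ⊢
    linear_combination h
  · rintro ⟨⟨a, x⟩, b, y⟩ hv
    simp only [mem_filter, mem_quadruples] at hv ⊢
    obtain ⟨⟨h, ha, hx, hb, hy⟩, hab⟩ := hv
    refine ⟨⟨?_, ha, by omega, by omega, hy⟩, by omega⟩
    zify [hab.le] at h ⊢
    linear_combination h
  · rintro ⟨⟨a, x⟩, b, y⟩ hv
    simp only [mem_filter] at hv
    simp only [Prod.mk.injEq, true_and, and_true]
    omega
  · rintro ⟨⟨a, x⟩, b, y⟩ hv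
    simp only [mem_filter] at hv
    simp only [Prod.mk.injEq, true_and, and_true]
    omega

theorem sum_quadruples_filter_snd_eq (f : ℕ → ℕ → M) :
    ∑ v ∈ quadruples n with v.1.2 = v.2.2, f v.1.1 v.2.1 =
      ∑ p ∈ n.divisorsAntidiagonal, ∑ a ∈ Ico 1 p.1, f a (p.1 - a) := by
  rw [sum_sigma']
  refine sum_nbij' (fun v => ⟨(v.1.1 + v.2.1, v.1.2), v.1.1⟩)
    (fun q => ((q.2, q.1.2), (q.1.1 - q.2, q.1.2))) ?_ ?_ ?_ ?_ ?_
  · rintro ⟨⟨a, x⟩, b, y⟩ hv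
    simp only [mem_filter, mem_quadruples] at hv
    obtain ⟨⟨h, ha, hx, hb, hy⟩, rfl⟩ := hv
    simp only [mem_sigma, Nat.mem_divisorsAntidiagonal, mem_Ico]
    refine ⟨⟨by rw [← h]; ring, by rw [← h]; positivity⟩, by omega, by omega⟩
  · rintro ⟨⟨c, x⟩, a⟩ hq
    simp only [mem_sigma, Nat.mem_divisorsAntidiagonal, mem_Ico] at hq
    obtain ⟨⟨h, hn⟩, ha, hac⟩ := hq
    simp only [mem_filter, mem_quadruples]
    refine ⟨⟨?_, by omega, by grind, by omega, by grind⟩, trivial⟩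
    rw [← h, ← add_mul, Nat.add_sub_cancel' hac.le]
  · rintro ⟨⟨a, x⟩, b, y⟩ hv
    simp only [mem_filter] at hv
    simp only [hv.2, Nat.add_sub_cancel_left]
  · rintro ⟨⟨c, x⟩, a⟩ hq
    simp only [mem_sigma, mem_Ico] at hq
    simp only [Nat.add_sub_cancel' hq.2.2.le]
  · rintro ⟨⟨a, x⟩, b, y⟩ _
    simp only [Nat.add_sub_cancel_left]

theorem sum_quadruples_filter_fst_eq (f : ℕ → ℕ → M) :
    ∑ v ∈ quadruples n with v.1.1 = v.2.1, f v.1.1 v.2.1 =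
      ∑ p ∈ n.divisorsAntidiagonal, (p.2 - 1) • f p.1 p.1 := by
  have : ∑ v ∈ quadruples n with v.1.1 = v.2.1, f v.1.1 v.2.1 =
      ∑ p ∈ n.divisorsAntidiagonal, ∑ _x ∈ Ico 1 p.2, f p.1 p.1 := by
    rw [sum_sigma']
    refine sum_nbij' (fun v => ⟨(v.1.1, v.1.2 + v.2.2), v.1.2⟩)
      (fun q => ((q.1.1, q.2), (q.1.1, q.1.2 - q.2))) ?_ ?_ ?_ ?_ ?_
    · rintro ⟨⟨a, x⟩, b, y⟩ hv
      simp only [mem_filter, mem_quadruples] at hv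
      obtain ⟨⟨h, ha, hx, hb, hy⟩, rfl⟩ := hv
      simp only [mem_sigma, Nat.mem_divisorsAntidiagonal, mem_Ico]
      refine ⟨⟨by rw [← h]; ring, by rw [← h]; positivity⟩, by omega, by omega⟩
    · rintro ⟨⟨a, d⟩, x⟩ hq
      simp only [mem_sigma, Nat.mem_divisorsAntidiagonal, mem_Ico] at hq
      obtain ⟨⟨h, hn⟩, hx, hxd⟩ := hq
      simp only [mem_filter, mem_quadruples]
      refine ⟨⟨?_, by grind, by omega, by grind, by omega⟩, trivial⟩
      rw [← h, ← mul_add, Nat.add_sub_cancel' hxd.le]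
    · rintro ⟨⟨a, x⟩, b, y⟩ hv
      simp only [mem_filter] at hv
      simp only [hv.2, Nat.add_sub_cancel_left]
    · rintro ⟨⟨a, d⟩, x⟩ hq
      simp only [mem_sigma, mem_Ico] at hq
      simp only [Nat.add_sub_cancel' hq.2.2.le]
    · rintro ⟨⟨a, x⟩, b, y⟩ hv
      simp only [mem_filter] at hv
      simp only [hv.2]
  rw [this]
  simp

variable {R : Type*} [CommSemiring R]

theorem sum_quadruples_pow_mul_pow (r s : ℕ) :
    ∑ v ∈ quadruples n, (v.1.1 : R) ^ r * (v.2.1 : R) ^ s =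
      ∑ p ∈ antidiagonal n, (σ r p.1 : R) * σ s p.2 := by
  simp only [sum_quadruples, ← mul_sum, ← sum_mul, natCast_sigma_eq_sum_divisors]
  refine sum_congr rfl fun p _ => ?_
  rw [Nat.sum_divisorsAntidiagonal (fun a _ => (a : R) ^ r),
    Nat.sum_divisorsAntidiagonal (fun a _ => (a : R) ^ s)]

theorem sum_quadruples_pow_mul_pow_add_pow_mul_pow (r s : ℕ) :
    ∑ v ∈ quadruples n, ((v.1.1 : R) ^ r * (v.2.1 : R) ^ s + (v.1.1 : R) ^ s * (v.2.1 : R) ^ r) =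
      2 * ∑ p ∈ antidiagonal n, (σ r p.1 * σ s p.2 : R) := by
  rw [sum_add_distrib, sum_quadruples_pow_mul_pow, sum_quadruples_pow_mul_pow,
    ← Nat.sum_antidiagonal_swap (f := fun p => (σ s p.1 * σ r p.2 : R))]
  simp only [Prod.fst_swap, Prod.snd_swap, mul_comm (σ s _ : R)]
  ring

end Quadruples

section Liouville

variable {M : Type*} [AddCommGroup M] (n : ℕ)

theorem liouville_identity (g : ℕ → ℕ → M) :
    ∑ v ∈ quadruples n with v.2.2 < v.1.2,
        (g v.1.1 (v.1.1 + v.2.1) + g (v.1.1 + v.2.1) v.1.1 - g v.1.1 v.2.1 - g v.2.1 v.1.1) =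
      ∑ v ∈ quadruples n with v.1.2 = v.2.2, g v.1.1 v.2.1 -
        ∑ v ∈ quadruples n with v.1.1 = v.2.1, g v.1.1 v.2.1 := by
  have swap_ab : ∑ v ∈ quadruples n with v.1.1 < v.2.1, g v.2.1 v.1.1 =
      ∑ v ∈ quadruples n with v.2.1 < v.1.1, g v.1.1 v.2.1 :=
    sum_filter_quadruples_swap n (fun v => v.2.1 < v.1.1) fun v => g v.1.1 v.2.1
  have swap_xy : ∑ v ∈ quadruples n with v.2.2 < v.1.2, g v.2.1 v.1.1 =
      ∑ v ∈ quadruples n with v.1.2 < v.2.2, g v.1.1 v.2.1 :=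
    sum_filter_quadruples_swap n (fun v => v.1.2 < v.2.2) fun v => g v.1.1 v.2.1
  simp only [sum_sub_distrib, sum_add_distrib]
  linear_combination (norm := abel) sum_quadruples_shear n g +
    sum_quadruples_shear n (fun a b => g b a) + swap_ab - swap_xy +
    sum_filter_lt_add_sum_filter_eq_add_sum_filter_gt (quadruples n) (·.1.1) (·.2.1)
      (fun v => g v.1.1 v.2.1) -
    sum_filter_lt_add_sum_filter_eq_add_sum_filter_gt (quadruples n) (·.1.2) (·.2.2)
      (fun v => g v.1.1 v.2.1)

theorem sum_quadruples_eq_of_symm (g t : ℕ → ℕ → M)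
    (ht : ∀ a b, g a (a + b) + g (a + b) a - g a b - g b a = t a b)
    (hsymm : ∀ a b, t a b = t b a) :
    ∑ v ∈ quadruples n, t v.1.1 v.2.1 =
      ∑ v ∈ quadruples n with v.1.2 = v.2.2, (t v.1.1 v.2.1 + 2 • g v.1.1 v.2.1) -
        2 • ∑ v ∈ quadruples n with v.1.1 = v.2.1, g v.1.1 v.2.1 := by
  have swap_xy : ∑ v ∈ quadruples n with v.1.2 < v.2.2, t v.1.1 v.2.1 =
      ∑ v ∈ quadruples n with v.2.2 < v.1.2, t v.1.1 v.2.1 :=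
    (sum_congr rfl fun _ _ => hsymm _ _).trans
      (sum_filter_quadruples_swap n (fun v => v.2.2 < v.1.2) fun v => t v.1.1 v.2.1)
  have liouville := liouville_identity n g
  simp only [ht] at liouville
  rw [sum_add_distrib, sum_nsmul]
  linear_combination (norm := abel) swap_xy + 2 • liouville -
    sum_filter_lt_add_sum_filter_eq_add_sum_filter_gt (quadruples n) (·.1.2) (·.2.2)
      (fun v => t v.1.1 v.2.1)

end Liouville

section Convolutions

theorem sum_quadruples_eq_of_certificate (n k : ℕ) (κ : ℚ) (G T : ℚ → ℚ → ℚ) (H : ℚ → ℚ)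
    (hT : ∀ a b, G a (a + b) + G (a + b) a - G a b - G b a = T a b)
    (hsymm : ∀ a b, T a b = T b a) (hG : ∀ b, G 0 b = 0)
    (hdiag : ∀ c, G c c = κ * c ^ (k + 1))
    (hH : ∀ c : ℕ, ∑ a ∈ range c, (T a (c - a) + 2 * G a (c - a)) = H c) :
    ∑ v ∈ quadruples n, T v.1.1 v.2.1 =
      ∑ d ∈ n.divisors, H d - 2 * κ * (n * σ k n - σ (k + 1) n) := by
  rw [sum_quadruples_eq_of_symm n (fun a b => G a b) (fun a b => T a b)
      (fun a b => by push_cast; exact hT a b) (fun a b => hsymm a b),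
    sum_quadruples_filter_snd_eq n (fun a b => T a b + 2 • G a b),
    sum_quadruples_filter_fst_eq n (fun a b => G a b), natCast_sigma_eq_sum_divisors,
    natCast_sigma_eq_sum_divisors, mul_sum, ← sum_sub_distrib, mul_sum, smul_sum,
    ← Nat.sum_divisorsAntidiagonal (fun a _ => H a), ← sum_sub_distrib,
    ← Nat.sum_divisorsAntidiagonal (fun a _ => _), ← sum_sub_distrib]
  refine sum_congr rfl fun p hp => ?_
  obtain ⟨hpn, -⟩ := Nat.mem_divisorsAntidiagonal.1 hp
  have hp1 : p.1 ≠ 0 := Nat.left_ne_zero_of_mem_divisorsAntidiagonal hp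
  have hp2 : p.2 ≠ 0 := Nat.right_ne_zero_of_mem_divisorsAntidiagonal hp
  have hT0 : T 0 p.1 = 0 := by simpa [hG] using (hT 0 p.1).symm
  rw [← hH, range_eq_Ico, sum_eq_sum_Ico_succ_bot (Nat.pos_of_ne_zero hp1)]
  simp only [Nat.cast_zero, sub_zero, hT0, hG, hdiag, mul_zero, zero_add, nsmul_eq_mul,
    Nat.cast_ofNat, Nat.cast_sub (Nat.one_le_iff_ne_zero.2 hp2), Nat.cast_one]
  rw [sum_congr rfl fun a ha => by rw [Nat.cast_sub (mem_Ico.1 ha).2.le], ← hpn]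
  push_cast
  ring

theorem sum_range_pow_two (c : ℕ) :
    ∑ a ∈ range c, (a : ℚ) ^ 2 = (2 * c ^ 3 - 3 * c ^ 2 + c) / 6 :=
  sum_range_induction _ (fun c : ℕ => (2 * (c : ℚ) ^ 3 - 3 * c ^ 2 + c) / 6) (by simp) c
    fun _ _ => by push_cast; ring

theorem sum_range_pow_three (c : ℕ) :
    ∑ a ∈ range c, (a : ℚ) ^ 3 = (c ^ 4 - 2 * c ^ 3 + c ^ 2) / 4 :=
  sum_range_induction _ (fun c : ℕ => ((c : ℚ) ^ 4 - 2 * c ^ 3 + c ^ 2) / 4) (by simp) c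
    fun _ _ => by push_cast; ring

theorem sum_range_pow_four (c : ℕ) :
    ∑ a ∈ range c, (a : ℚ) ^ 4 = (6 * c ^ 5 - 15 * c ^ 4 + 10 * c ^ 3 - c) / 30 :=
  sum_range_induction _ (fun c : ℕ => (6 * (c : ℚ) ^ 5 - 15 * c ^ 4 + 10 * c ^ 3 - c) / 30)
    (by simp) c fun _ _ => by push_cast; ring

theorem sum_range_pow_five (c : ℕ) :
    ∑ a ∈ range c, (a : ℚ) ^ 5 = (2 * c ^ 6 - 6 * c ^ 5 + 5 * c ^ 4 - c ^ 2) / 12 :=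
  sum_range_induction _ (fun c : ℕ => (2 * (c : ℚ) ^ 6 - 6 * c ^ 5 + 5 * c ^ 4 - c ^ 2) / 12)
    (by simp) c fun _ _ => by push_cast; ring

theorem sum_range_pow_six (c : ℕ) :
    ∑ a ∈ range c, (a : ℚ) ^ 6 = (6 * c ^ 7 - 21 * c ^ 6 + 21 * c ^ 5 - 7 * c ^ 3 + c) / 42 :=
  sum_range_induction _
    (fun c : ℕ => (6 * (c : ℚ) ^ 7 - 21 * c ^ 6 + 21 * c ^ 5 - 7 * c ^ 3 + c) / 42)
    (by simp) c fun _ _ => by push_cast; ring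

variable (n : ℕ)

theorem sum_antidiagonal_sigma_one_mul_sigma_three :
    240 * ∑ p ∈ antidiagonal n, σ 1 p.1 * σ 3 p.2 + σ 1 n + 30 * n * σ 3 n =
      10 * σ 3 n + 21 * σ 5 n := by
  have key := sum_quadruples_eq_of_certificate n 3 1
    (fun a b => 2 * a ^ 4 - 4 * a * b ^ 3 + 3 * a ^ 2 * b ^ 2)
    -- `^ 1` is written out so that the sums below match `natCast_sigma_eq_sum_divisors 1`
    (fun a b => 8 * (a ^ 1 * b ^ 3 + a ^ 3 * b ^ 1))
    (fun c => (10 * c ^ 3 + 21 * c ^ 5 - c ^ 1 - 30 * c ^ 4) / 15)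
    (fun _ _ => by ring) (fun _ _ => by ring) (fun _ => by ring) (fun _ => by ring) fun c => by
      ring_nf
      simp only [sum_add_distrib, sum_sub_distrib, ← sum_mul, sum_range_pow_two,
        sum_range_pow_three, sum_range_pow_four]
      ring
  rw [← mul_sum, sum_quadruples_pow_mul_pow_add_pow_mul_pow] at key
  simp only [← sum_div, sum_add_distrib, sum_sub_distrib, ← mul_sum, Nat.reduceAdd,
    ← natCast_sigma_eq_sum_divisors] at key
  exact_mod_cast (by linear_combination 15 * key :
    (240 * ∑ p ∈ antidiagonal n, (σ 1 p.1 * σ 3 p.2 : ℚ)) + σ 1 n + 30 * n * σ 3 n =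
      10 * σ 3 n + 21 * σ 5 n)

theorem sum_antidiagonal_sigma_one_mul_sigma_five :
    504 * ∑ p ∈ antidiagonal n, σ 1 p.1 * σ 5 p.2 + 42 * n * σ 5 n =
      σ 1 n + 21 * σ 5 n + 20 * σ 7 n := by
  have key := sum_quadruples_eq_of_certificate n 5 1
    (fun a b => 2 * a ^ 6 - 6 * a * b ^ 5 + 5 * a ^ 2 * b ^ 4)
    (fun a b => 12 * (a ^ 1 * b ^ 5 + a ^ 5 * b ^ 1))
    (fun c => (c ^ 1 + 21 * c ^ 5 + 20 * c ^ 7 - 42 * c ^ 6) / 21)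
    (fun _ _ => by ring) (fun _ _ => by ring) (fun _ => by ring) (fun _ => by ring) fun c => by
      ring_nf
      simp only [sum_add_distrib, sum_sub_distrib, ← sum_mul, sum_range_pow_two,
        sum_range_pow_three, sum_range_pow_four, sum_range_pow_five, sum_range_pow_six]
      ring
  rw [← mul_sum, sum_quadruples_pow_mul_pow_add_pow_mul_pow] at key
  simp only [← sum_div, sum_add_distrib, sum_sub_distrib, ← mul_sum, Nat.reduceAdd,
    ← natCast_sigma_eq_sum_divisors] at key
  exact_mod_cast (by linear_combination 21 * key :
    (504 * ∑ p ∈ antidiagonal n, (σ 1 p.1 * σ 5 p.2 : ℚ)) + 42 * n * σ 5 n =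
      σ 1 n + 21 * σ 5 n + 20 * σ 7 n)

theorem sum_antidiagonal_sigma_three_mul_sigma_three :
    120 * ∑ p ∈ antidiagonal n, σ 3 p.1 * σ 3 p.2 + σ 3 n = σ 7 n := by
  have key := sum_quadruples_eq_of_certificate n 0 0
    (fun a b => a ^ 2 * b ^ 4 - a ^ 3 * b ^ 3) (fun a b => 4 * (a ^ 3 * b ^ 3))
    (fun c => (c ^ 7 - c ^ 3) / 30)
    (fun _ _ => by ring) (fun _ _ => by ring) (fun _ => by ring) (fun _ => by ring) fun c => by
      ring_nf
      simp only [sum_add_distrib, sum_sub_distrib, ← sum_mul, sum_range_pow_two,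
        sum_range_pow_three, sum_range_pow_four, sum_range_pow_five]
      ring
  rw [← mul_sum, sum_quadruples_pow_mul_pow] at key
  simp only [← sum_div, sum_sub_distrib, ← natCast_sigma_eq_sum_divisors] at key
  exact_mod_cast (by linear_combination 30 * key :
    (120 * ∑ p ∈ antidiagonal n, (σ 3 p.1 * σ 3 p.2 : ℚ)) + σ 3 n = σ 7 n)

end Convolutions

section Theta

variable (R : Type*) [CommSemiring R]

noncomputable def theta : Derivation R R⟦X⟧ R⟦X⟧ := (X : R⟦X⟧) • derivative R

noncomputable def sigmaSeries (k : ℕ) : R⟦X⟧ := mk fun n => (σ k n : R)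

variable {R}

theorem coeff_theta (f : R⟦X⟧) (n : ℕ) : coeff n (theta R f) = n * coeff n f := by
  rcases n with _ | n
  · simp [theta]
  · simp [theta, coeff_succ_X_mul, coeff_derivative, mul_comm]

theorem theta_ofNat (m : ℕ) [m.AtLeastTwo] : theta R (no_index (OfNat.ofNat m)) = 0 := by
  rw [← Nat.cast_ofNat, Derivation.map_natCast]

theorem coeff_ofNat_mul (m : ℕ) [m.AtLeastTwo] (f : R⟦X⟧) (n : ℕ) :
    coeff n ((no_index (OfNat.ofNat m) : R⟦X⟧) * f) = OfNat.ofNat m * coeff n f := by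
  rw [← map_ofNat C, coeff_C_mul]

@[simp]
theorem coeff_sigmaSeries (k n : ℕ) : coeff n (sigmaSeries R k) = σ k n := coeff_mk _ _

@[simp]
theorem constantCoeff_sigmaSeries (k : ℕ) : constantCoeff (sigmaSeries R k) = 0 := by
  rw [← coeff_zero_eq_constantCoeff_apply, coeff_sigmaSeries, ArithmeticFunction.map_zero,
    Nat.cast_zero]

theorem sigmaSeries_one_mul_sigmaSeries_three :
    240 * (sigmaSeries R 1 * sigmaSeries R 3) + sigmaSeries R 1 + 30 * theta R (sigmaSeries R 3) =
      10 * sigmaSeries R 3 + 21 * sigmaSeries R 5 := by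
  ext n
  simp only [map_add, coeff_ofNat_mul]
  simp only [coeff_mul, coeff_sigmaSeries, coeff_theta]
  have h := sum_antidiagonal_sigma_one_mul_sigma_three n
  rw [mul_assoc 30] at h
  exact_mod_cast congrArg (Nat.cast : ℕ → R) h

theorem sigmaSeries_one_mul_sigmaSeries_five :
    504 * (sigmaSeries R 1 * sigmaSeries R 5) + 42 * theta R (sigmaSeries R 5) =
      sigmaSeries R 1 + 21 * sigmaSeries R 5 + 20 * sigmaSeries R 7 := by
  ext n
  simp only [map_add, coeff_ofNat_mul]
  simp only [coeff_mul, coeff_sigmaSeries, coeff_theta]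
  have h := sum_antidiagonal_sigma_one_mul_sigma_five n
  rw [mul_assoc 42] at h
  exact_mod_cast congrArg (Nat.cast : ℕ → R) h

theorem sigmaSeries_three_mul_sigmaSeries_three :
    120 * (sigmaSeries R 3 * sigmaSeries R 3) + sigmaSeries R 3 = sigmaSeries R 7 := by
  ext n
  simp only [map_add, coeff_ofNat_mul]
  simp only [coeff_mul, coeff_sigmaSeries]
  exact_mod_cast congrArg (Nat.cast : ℕ → R) (sum_antidiagonal_sigma_three_mul_sigma_three n)

end Theta

section Ramanujan

variable (R : Type*) [CommRing R]

noncomputable def E₂ : R⟦X⟧ := 1 - 24 * sigmaSeries R 1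

noncomputable def E₄ : R⟦X⟧ := 1 + 240 * sigmaSeries R 3

noncomputable def E₆ : R⟦X⟧ := 1 - 504 * sigmaSeries R 5

variable {R}

theorem theta_E₄ : 3 * theta R (E₄ R) = E₂ R * E₄ R - E₆ R := by
  have h := sigmaSeries_one_mul_sigmaSeries_three (R := R)
  simp only [E₂, E₄, E₆, map_add, Derivation.leibniz, smul_eq_mul, Derivation.map_one_eq_zero,
    theta_ofNat]
  linear_combination 24 * h

theorem theta_E₆ : 2 * theta R (E₆ R) = E₂ R * E₆ R - E₄ R ^ 2 := by
  have h15 := sigmaSeries_one_mul_sigmaSeries_five (R := R)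
  have h33 := sigmaSeries_three_mul_sigmaSeries_three (R := R)
  simp only [E₂, E₄, E₆, map_sub, Derivation.leibniz, smul_eq_mul, Derivation.map_one_eq_zero,
    theta_ofNat]
  linear_combination -24 * h15 + 480 * h33

theorem theta_E₄_pow_three_sub_E₆_sq :
    theta R (E₄ R ^ 3 - E₆ R ^ 2) = E₂ R * (E₄ R ^ 3 - E₆ R ^ 2) := by
  have h4 := theta_E₄ (R := R)
  have h6 := theta_E₆ (R := R)
  simp only [map_sub, Derivation.leibniz_pow, smul_eq_mul, nsmul_eq_mul]
  push_cast
  linear_combination E₄ R ^ 2 * h4 - E₆ R * h6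

theorem eq_zero_of_theta_eq_mul [IsAddTorsionFree R] {P f : R⟦X⟧} (hP : constantCoeff P = 1)
    (hf : theta R f = P * f) (h1 : coeff 1 f = 0) : f = 0 := by
  ext m
  induction m using Nat.strong_induction_on with
  | _ m ih =>
    have hm := congrArg (coeff m) hf
    rw [coeff_theta, coeff_mul, sum_eq_single (0, m), coeff_zero_eq_constantCoeff_apply, hP,
      one_mul] at hm
    · rw [map_zero]
      rcases m with _ | _ | m
      · simpa using hm.symm
      · exact h1
      · have : (m + 1) • coeff (m + 2) f = 0 := by
          rw [nsmul_eq_mul]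
          push_cast at hm ⊢
          linear_combination hm
        exact (nsmul_eq_zero_iff_right m.succ_ne_zero).1 this
    · rintro ⟨i, j⟩ hij hne
      rw [HasAntidiagonal.mem_antidiagonal] at hij
      rw [ih j (by grind), map_zero, mul_zero]
    · simp

end Ramanujan

section Discriminant

noncomputable def delta (R : Type*) [CommRing R] : R⟦X⟧ := mk fun n => (ramanujanTau n : R)

noncomputable def deltaTrunc (N : ℕ) : ℤ⟦X⟧ := X * ∏ i ∈ range N, (1 - X ^ (i + 1)) ^ 24

noncomputable def lambertTerm (i : ℕ) : ℤ⟦X⟧ := mk fun k => if i ∈ k.divisors then (i : ℤ) else 0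

theorem coeff_deltaTrunc_self (n : ℕ) : coeff n (deltaTrunc n) = ramanujanTau n := by
  rw [ramanujanTau, ← Polynomial.coeff_coe, ← Polynomial.coeToPowerSeries.ringHom_apply, map_mul,
    map_prod]
  simp only [map_pow, map_sub, map_one, Polynomial.coeToPowerSeries.ringHom_apply,
    Polynomial.coe_X, deltaTrunc]

theorem ramanujanTau_one : ramanujanTau 1 = 1 := by
  simp [← coeff_deltaTrunc_self, deltaTrunc, coeff_succ_X_mul]

theorem X_pow_dvd_deltaTrunc_sub {k N : ℕ} (h : k ≤ N) :
    X ^ (k + 1) ∣ deltaTrunc N - deltaTrunc k := by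
  rw [deltaTrunc, deltaTrunc, ← prod_range_mul_prod_Ico _ h, ← mul_sub, ← mul_sub_one]
  refine dvd_mul_of_dvd_right (dvd_mul_of_dvd_right ?_ _) _
  rw [← Ideal.mem_span_singleton, ← Ideal.Quotient.eq, map_prod, map_one]
  refine prod_eq_one fun i hi => ?_
  rw [map_pow, map_sub, map_one, Ideal.Quotient.eq_zero_iff_mem.2
    (Ideal.mem_span_singleton.2 (pow_dvd_pow X (by grind))), sub_zero, one_pow]

theorem coeff_deltaTrunc {k N : ℕ} (h : k ≤ N) : coeff k (deltaTrunc N) = ramanujanTau k := by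
  have := X_pow_dvd_iff.1 (X_pow_dvd_deltaTrunc_sub h) k (Nat.lt_succ_self k)
  rwa [map_sub, sub_eq_zero, coeff_deltaTrunc_self] at this

theorem lambertTerm_mul_one_sub_X_pow (i : ℕ) :
    lambertTerm i * (1 - X ^ i) = (i : ℤ⟦X⟧) * X ^ i := by
  ext k
  rw [mul_sub, mul_one, map_sub, coeff_mul_X_pow', ← map_natCast (C : ℤ →+* ℤ⟦X⟧),
    coeff_C_mul_X_pow]
  simp only [lambertTerm, coeff_mk, Nat.mem_divisors, Nat.dvd_sub_self_right]
  have := @Nat.le_of_dvd i k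
  have := dvd_refl i
  split_ifs <;> grind

theorem coeff_sum_lambertTerm {k N : ℕ} (h : k ≤ N) :
    coeff k (∑ i ∈ Icc 1 N, lambertTerm i) = σ 1 k := by
  simp only [map_sum, lambertTerm, coeff_mk, sum_ite_mem, ArithmeticFunction.sigma_one_apply]
  rw [inter_eq_right.2 fun d hd => ?_]
  · push_cast; rfl
  · have := Nat.divisor_le hd
    have := Nat.pos_of_mem_divisors hd
    simp only [mem_Icc]; omega

theorem theta_deltaTrunc (N : ℕ) :
    theta ℤ (deltaTrunc N) = deltaTrunc N * (1 - 24 * ∑ i ∈ Icc 1 N, lambertTerm i) := by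
  have theta_X : theta ℤ X = X := by simp [theta]
  induction N with
  | zero => simp [deltaTrunc, theta_X]
  | succ N ih =>
    have hu : theta ℤ (1 - X ^ (N + 1)) = -(lambertTerm (N + 1) * (1 - X ^ (N + 1))) := by
      rw [lambertTerm_mul_one_sub_X_pow, map_sub, Derivation.map_one_eq_zero,
        Derivation.leibniz_pow, theta_X]
      simp only [smul_eq_mul, nsmul_eq_mul, add_tsub_cancel_right]
      push_cast
      ring
    rw [deltaTrunc, prod_range_succ, ← mul_assoc, ← deltaTrunc, Derivation.leibniz, ih,
      Derivation.leibniz_pow, hu, sum_Icc_succ_top (by omega)]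
    simp only [smul_eq_mul, nsmul_eq_mul]
    push_cast
    ring

theorem theta_delta : theta ℤ (delta ℤ) = E₂ ℤ * delta ℤ := by
  ext m
  set L := 1 - 24 * ∑ i ∈ Icc 1 m, lambertTerm i
  have hΔ : X ^ (m + 1) ∣ delta ℤ - deltaTrunc m := X_pow_dvd_iff.2 fun k hk => by
    rw [map_sub, coeff_deltaTrunc (by omega), delta, coeff_mk, Int.cast_id, sub_self]
  have hE : X ^ (m + 1) ∣ E₂ ℤ - L := X_pow_dvd_iff.2 fun k hk => by
    simp only [L, E₂, map_sub, coeff_ofNat_mul, coeff_sigmaSeries,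
      coeff_sum_lambertTerm (by omega : k ≤ m), sub_self]
  have hm : X ^ (m + 1) ∣ E₂ ℤ * delta ℤ - deltaTrunc m * L := by
    rw [show E₂ ℤ * delta ℤ - deltaTrunc m * L =
      E₂ ℤ * (delta ℤ - deltaTrunc m) + deltaTrunc m * (E₂ ℤ - L) by ring]
    exact dvd_add (dvd_mul_of_dvd_right hΔ _) (dvd_mul_of_dvd_right hE _)
  have := X_pow_dvd_iff.1 hm m (lt_add_one m)
  rw [map_sub, sub_eq_zero, ← theta_deltaTrunc, coeff_theta, coeff_deltaTrunc le_rfl] at this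
  rw [coeff_theta, this, delta, coeff_mk, Int.cast_id]

end Discriminant

section Reduction

variable {R S : Type*} [CommRing R] [CommRing S]

@[simp]
theorem map_sigmaSeries (f : R →+* S) (k : ℕ) : map f (sigmaSeries R k) = sigmaSeries S k := by
  ext n
  simp [sigmaSeries]

theorem map_E₄ (f : R →+* S) : map f (E₄ R) = E₄ S := by simp [E₄, map_ofNat]

theorem map_E₆ (f : R →+* S) : map f (E₆ R) = E₆ S := by simp [E₆, map_ofNat]

theorem map_delta : map (Int.castRingHom R) (delta ℤ) = delta R := by
  ext n
  simp [delta]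

theorem E₄_pow_three_sub_E₆_sq : E₄ R ^ 3 - E₆ R ^ 2 = 1728 * delta R := by
  suffices E₄ ℤ ^ 3 - E₆ ℤ ^ 2 = 1728 * delta ℤ by
    simpa [map_E₄, map_E₆, map_delta, map_ofNat] using congrArg (map (Int.castRingHom R)) this
  rw [← sub_eq_zero]
  refine eq_zero_of_theta_eq_mul (P := E₂ ℤ) (by simp [E₂, map_ofNat]) ?_ ?_
  · rw [map_sub, theta_E₄_pow_three_sub_E₆_sq, Derivation.leibniz, theta_delta, theta_ofNat,
      smul_eq_mul, smul_zero]
    ring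
  · rw [map_sub, coeff_ofNat_mul]
    simp [E₄, E₆, delta, coeff_mul, Finset.Nat.antidiagonal_succ, pow_succ, map_ofNat,
      ramanujanTau_one]

theorem sigmaSeries_zmod_prime (p : ℕ) [Fact p.Prime] :
    sigmaSeries (ZMod p) p = sigmaSeries (ZMod p) 1 := by
  ext n
  simp [sigmaSeries, ArithmeticFunction.sigma_apply, ZMod.pow_card]

theorem ofNat_five_eq_zero : (5 : (ZMod 5)⟦X⟧) = 0 := by
  rw [← map_ofNat C 5, show (5 : ZMod 5) = 0 from rfl, map_zero]

theorem E₂_zmod_five : E₂ (ZMod 5) = 1 + sigmaSeries (ZMod 5) 1 := by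
  rw [E₂]
  linear_combination -5 * sigmaSeries (ZMod 5) 1 * ofNat_five_eq_zero

theorem E₄_zmod_five : E₄ (ZMod 5) = 1 := by
  rw [E₄]
  linear_combination 48 * sigmaSeries (ZMod 5) 3 * ofNat_five_eq_zero

theorem E₆_zmod_five : E₆ (ZMod 5) = 1 + sigmaSeries (ZMod 5) 1 := by
  have : Fact (Nat.Prime 5) := ⟨by norm_num⟩
  rw [E₆, sigmaSeries_zmod_prime 5]
  linear_combination -101 * sigmaSeries (ZMod 5) 1 * ofNat_five_eq_zero

theorem delta_zmod_five : delta (ZMod 5) = theta (ZMod 5) (sigmaSeries (ZMod 5) 1) := by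
  have hΔ := E₄_pow_three_sub_E₆_sq (R := ZMod 5)
  have hθ := theta_E₆ (R := ZMod 5)
  rw [E₂_zmod_five, E₄_zmod_five, E₆_zmod_five, map_add, Derivation.map_one_eq_zero,
    zero_add] at hθ
  rw [E₄_zmod_five, E₆_zmod_five] at hΔ
  linear_combination -2 * hΔ + 2 * hθ -
    (691 * delta (ZMod 5) + theta (ZMod 5) (sigmaSeries (ZMod 5) 1)) * ofNat_five_eq_zero

end Reduction

theorem tau_congruent_mod_five_general (n : ℕ) :
    ramanujanTau n ≡ (n * ArithmeticFunction.sigma 1 n : ℕ) [ZMOD 5] := by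
  refine (ZMod.intCast_eq_intCast_iff _ _ 5).1 ?_
  simpa [delta, coeff_theta] using congrArg (coeff n) delta_zmod_five

theorem tau_congruent_mod_five (n : ℕ) (hn : 1 ≤ n) :
    ramanujanTau n ≡ (n * ArithmeticFunction.sigma 1 n : ℕ) [ZMOD 5] :=
  tau_congruent_mod_five_general n
end
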